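/- arXiv:2007.05170 — 3 statements merged into one kernel-verified Lean document; each statement's English description precedes it below -/
import Mathlib

section
/- Lemma C.2. Fix a real number q with 1 < q ≤ 2 and let a > 0. Let {γ_j}_{j≥0} be a non-increasing sequence of positive real numbers with γ_0 < 1/(2a), and suppose γ_{ℓ−1}/γ_ℓ ≤ 1 + (a/(2(q−1)))·γ_ℓ for all ℓ ≥ 1. Then for every k ≥ 0, ∑_{j=0}^{k} γ_j^q ∏_{ℓ=j+1}^{k} (1 − γ_ℓ a) ≤ (2/a)·γ_k^{q−1}. -/
open scoped BigOperators

/-- **Lemma C.2**. -/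
theorem lemma_C_2 (q a : ℝ) (hq1 : 1 < q) (hq2 : q ≤ 2) (ha : 0 < a) (γ : ℕ → ℝ)
    (hpos : ∀ j, 0 < γ j) (hmono : ∀ j, γ (j + 1) ≤ γ j) (h0 : γ 0 < 1 / (2 * a))
    (hratio : ∀ l : ℕ, γ l / γ (l + 1) ≤ 1 + a / (2 * (q - 1)) * γ (l + 1)) :
    ∀ k : ℕ,
      ∑ j ∈ Finset.range (k + 1),
          γ j ^ q * ∏ l ∈ Finset.Ico (j + 1) (k + 1), (1 - γ l * a) ≤
        2 / a * γ k ^ (q - 1) := by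
  have hq1' : (0:ℝ) < q - 1 := by linarith
  have hγ0 : ∀ l, γ l ≤ γ 0 := fun l => (antitone_nat_of_succ_le hmono) (Nat.zero_le l)
  have hsmall : ∀ l, γ l * a < 1 / 2 := by
    intro l
    have h1 : γ l < 1 / (2 * a) := lt_of_le_of_lt (hγ0 l) h0
    rw [lt_div_iff₀ (by positivity)] at h1
    nlinarith
  -- key: γ l ^ (q-1) ≤ γ (l+1) ^ (q-1) * (1 + a/2 * γ (l+1))
  have key : ∀ l, γ l ^ (q - 1) ≤ γ (l + 1) ^ (q - 1) * (1 + a / 2 * γ (l + 1)) := by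
    intro l
    have hx : (0:ℝ) < γ (l + 1) := hpos (l + 1)
    have h1 : γ l ≤ γ (l + 1) * (1 + a / (2 * (q - 1)) * γ (l + 1)) := by
      have := hratio l
      rw [div_le_iff₀ hx] at this
      nlinarith
    have h2 : γ l ^ (q - 1) ≤ (γ (l + 1) * (1 + a / (2 * (q - 1)) * γ (l + 1))) ^ (q - 1) :=
      Real.rpow_le_rpow (hpos l).le h1 hq1'.le
    have hs : (0:ℝ) ≤ a / (2 * (q - 1)) * γ (l + 1) := by positivity
    rw [Real.mul_rpow hx.le (by linarith)] at h2
    have h3 : (1 + a / (2 * (q - 1)) * γ (l + 1)) ^ (q - 1) ≤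
        1 + (q - 1) * (a / (2 * (q - 1)) * γ (l + 1)) :=
      rpow_one_add_le_one_add_mul_self (by linarith) hq1'.le (by linarith)
    have h4 : (q - 1) * (a / (2 * (q - 1)) * γ (l + 1)) = a / 2 * γ (l + 1) := by
      field_simp
    rw [h4] at h3
    calc γ l ^ (q - 1) ≤ γ (l + 1) ^ (q - 1) * (1 + a / (2 * (q - 1)) * γ (l + 1)) ^ (q - 1) := h2
      _ ≤ γ (l + 1) ^ (q - 1) * (1 + a / 2 * γ (l + 1)) := by
          apply mul_le_mul_of_nonneg_left h3 (Real.rpow_nonneg hx.le _)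
  intro k
  induction k with
  | zero =>
      rw [show (0:ℕ)+1 = 1 from rfl, Finset.sum_range_one, Finset.Ico_self,
        Finset.prod_empty, mul_one]
      have hg : γ 0 ≤ 2 / a := by
        have h1 : γ 0 < 1 / (2 * a) := h0
        rw [lt_div_iff₀ (by positivity)] at h1
        rw [le_div_iff₀ ha]
        nlinarith
      calc γ 0 ^ q = γ 0 ^ (q - 1) * γ 0 := by
            rw [← Real.rpow_add_one (hpos 0).ne']; ring_nf
        _ ≤ γ 0 ^ (q - 1) * (2 / a) :=
            mul_le_mul_of_nonneg_left hg (Real.rpow_nonneg (hpos 0).le _)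
        _ = 2 / a * γ 0 ^ (q - 1) := mul_comm _ _
  | succ k ih =>
      have hx : (0:ℝ) < γ (k + 1) := hpos (k + 1)
      have hfac : (0:ℝ) ≤ 1 - γ (k + 1) * a := by linarith [hsmall (k + 1)]
      have hsum : ∑ j ∈ Finset.range (k + 1 + 1),
            γ j ^ q * ∏ l ∈ Finset.Ico (j + 1) (k + 1 + 1), (1 - γ l * a) =
          (∑ j ∈ Finset.range (k + 1),
            γ j ^ q * ∏ l ∈ Finset.Ico (j + 1) (k + 1), (1 - γ l * a)) * (1 - γ (k + 1) * a)
            + γ (k + 1) ^ q := by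
        rw [Finset.sum_range_succ, Finset.Ico_self, Finset.prod_empty, mul_one,
          Finset.sum_mul]
        congr 1
        apply Finset.sum_congr rfl
        intro j hj
        rw [Finset.mem_range] at hj
        rw [Finset.prod_Ico_succ_top (by omega : j + 1 ≤ k + 1)]
        ring
      rw [hsum]
      have step1 : (∑ j ∈ Finset.range (k + 1),
            γ j ^ q * ∏ l ∈ Finset.Ico (j + 1) (k + 1), (1 - γ l * a)) * (1 - γ (k + 1) * a)
            + γ (k + 1) ^ q ≤
          2 / a * γ k ^ (q - 1) * (1 - γ (k + 1) * a) + γ (k + 1) ^ q := by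
        have := mul_le_mul_of_nonneg_right ih hfac
        linarith
      have step2 : 2 / a * γ k ^ (q - 1) * (1 - γ (k + 1) * a) + γ (k + 1) ^ q ≤
          2 / a * (γ (k + 1) ^ (q - 1) * (1 + a / 2 * γ (k + 1))) * (1 - γ (k + 1) * a)
            + γ (k + 1) ^ q := by
        have h2a : (0:ℝ) ≤ 2 / a := by positivity
        have := mul_le_mul_of_nonneg_right
          (mul_le_mul_of_nonneg_left (key k) h2a) hfac
        linarith
      have hq : γ (k + 1) ^ q = γ (k + 1) ^ (q - 1) * γ (k + 1) := by
        rw [← Real.rpow_add_one hx.ne']; ring_nf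
      have step3 : 2 / a * (γ (k + 1) ^ (q - 1) * (1 + a / 2 * γ (k + 1))) * (1 - γ (k + 1) * a)
            + γ (k + 1) ^ q ≤ 2 / a * γ (k + 1) ^ (q - 1) := by
        rw [hq]
        set y := γ (k + 1) ^ (q - 1) with hy
        have hy0 : (0:ℝ) ≤ y := Real.rpow_nonneg hx.le _
        have hexp : 2 / a * (y * (1 + a / 2 * γ (k + 1))) * (1 - γ (k + 1) * a)
            + y * γ (k + 1) = 2 / a * y - a * y * γ (k + 1) ^ 2 := by
          field_simp
          ring
        rw [hexp]
        nlinarith [sq_nonneg (γ (k + 1)), mul_nonneg (mul_nonneg ha.le hy0) (sq_nonneg (γ (k+1)))]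
      linarith
end

section
/- Lemma C.3. Fix real numbers a, b > 0. Let {γ_j}_{j≥0} and {ρ_j}_{j≥0} be non-increasing sequences of non-negative real numbers such that 2 a γ_j ≤ b ρ_j for all j ≥ 0 and ρ_0 < 1/b. Then for every k ≥ 0, ∑_{j=0}^{k} γ_j ∏_{ℓ=j+1}^{k} (1 − γ_ℓ a) ∏_{i=0}^{j} (1 − ρ_i b) ≤ (1/a)·∏_{ℓ=0}^{k} (1 − γ_ℓ a). -/
open scoped BigOperators

/-- **Lemma C.3**. -/
theorem lemma_C_3 (a b : ℝ) (ha : 0 < a) (hb : 0 < b) (γ ρ : ℕ → ℝ)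
    (hγnonneg : ∀ j, 0 ≤ γ j) (hρnonneg : ∀ j, 0 ≤ ρ j)
    (hγmono : ∀ j, γ (j + 1) ≤ γ j) (hρmono : ∀ j, ρ (j + 1) ≤ ρ j)
    (hcomp : ∀ j, 2 * a * γ j ≤ b * ρ j) (hρ0 : ρ 0 < 1 / b) :
    ∀ k : ℕ,
      ∑ j ∈ Finset.range (k + 1),
          γ j * (∏ l ∈ Finset.Ico (j + 1) (k + 1), (1 - γ l * a)) *
            ∏ i ∈ Finset.range (j + 1), (1 - ρ i * b) ≤
        1 / a * ∏ l ∈ Finset.range (k + 1), (1 - γ l * a) := by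
  have hρle : ∀ i, ρ i ≤ ρ 0 := fun i =>
    antitone_nat_of_succ_le hρmono (Nat.zero_le i)
  have hρb : ∀ i, ρ i * b < 1 := by
    intro i
    have h0 : ρ 0 * b < 1 := (lt_div_iff₀ hb).mp hρ0
    have := mul_le_mul_of_nonneg_right (hρle i) hb.le
    linarith
  have hγa : ∀ i, γ i * a ≤ 1 / 2 := by
    intro i
    have h1 := hcomp i
    have h2 := hρb i
    nlinarith
  have hgnn : ∀ i, 0 ≤ 1 - γ i * a := fun i => by linarith [hγa i]
  have hgle1 : ∀ i, 1 - γ i * a ≤ 1 := fun i => by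
    have := mul_nonneg (hγnonneg i) ha.le; linarith
  have hrnn : ∀ i, 0 ≤ 1 - ρ i * b := fun i => le_of_lt (by linarith [hρb i])
  have hkey : ∀ i, 1 - ρ i * b ≤ (1 - γ i * a) ^ 2 := by
    intro i
    have h1 := hcomp i
    nlinarith [sq_nonneg (γ i * a)]
  have hQnn : ∀ n, 0 ≤ ∏ i ∈ Finset.range n, (1 - γ i * a) := fun n =>
    Finset.prod_nonneg (fun i _ => hgnn i)
  -- key telescoping estimate
  have hsum : ∀ n : ℕ,
      a * ∑ j ∈ Finset.range n, γ j * ∏ i ∈ Finset.range (j + 1), (1 - γ i * a) ≤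
        1 - ∏ i ∈ Finset.range n, (1 - γ i * a) := by
    intro n
    induction n with
    | zero => simp
    | succ n ih =>
      rw [Finset.sum_range_succ, Finset.prod_range_succ]
      have h1 : γ n * ∏ i ∈ Finset.range (n + 1), (1 - γ i * a) ≤
          γ n * ∏ i ∈ Finset.range n, (1 - γ i * a) := by
        apply mul_le_mul_of_nonneg_left _ (hγnonneg n)
        rw [Finset.prod_range_succ]
        exact mul_le_of_le_one_right (hQnn n) (hgle1 n)
      have h2 := mul_le_mul_of_nonneg_left h1 ha.le
      rw [Finset.prod_range_succ] at h2
      nlinarith [hQnn n]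
  intro k
  have hterm : ∀ j ∈ Finset.range (k + 1),
      γ j * (∏ l ∈ Finset.Ico (j + 1) (k + 1), (1 - γ l * a)) *
          ∏ i ∈ Finset.range (j + 1), (1 - ρ i * b) ≤
        (∏ l ∈ Finset.range (k + 1), (1 - γ l * a)) *
          (γ j * ∏ i ∈ Finset.range (j + 1), (1 - γ i * a)) := by
    intro j hj
    have hjk : j + 1 ≤ k + 1 := Nat.succ_le_succ (Nat.lt_succ_iff.mp (Finset.mem_range.mp hj))
    have hIconn : 0 ≤ ∏ l ∈ Finset.Ico (j + 1) (k + 1), (1 - γ l * a) :=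
      Finset.prod_nonneg (fun i _ => hgnn i)
    have hprodr : ∏ i ∈ Finset.range (j + 1), (1 - ρ i * b) ≤
        ∏ i ∈ Finset.range (j + 1), (1 - γ i * a) ^ 2 :=
      Finset.prod_le_prod (fun i _ => hrnn i) (fun i _ => hkey i)
    have hsplit : (∏ i ∈ Finset.range (j + 1), (1 - γ i * a)) *
        ∏ l ∈ Finset.Ico (j + 1) (k + 1), (1 - γ l * a) =
        ∏ l ∈ Finset.range (k + 1), (1 - γ l * a) :=
      Finset.prod_range_mul_prod_Ico _ hjk
    calc γ j * (∏ l ∈ Finset.Ico (j + 1) (k + 1), (1 - γ l * a)) *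
          ∏ i ∈ Finset.range (j + 1), (1 - ρ i * b)
        ≤ γ j * (∏ l ∈ Finset.Ico (j + 1) (k + 1), (1 - γ l * a)) *
          ∏ i ∈ Finset.range (j + 1), (1 - γ i * a) ^ 2 := by
          exact mul_le_mul_of_nonneg_left hprodr (mul_nonneg (hγnonneg j) hIconn)
      _ = (∏ l ∈ Finset.range (k + 1), (1 - γ l * a)) *
          (γ j * ∏ i ∈ Finset.range (j + 1), (1 - γ i * a)) := by
          rw [← hsplit, Finset.prod_pow]; ring
  calc ∑ j ∈ Finset.range (k + 1),
        γ j * (∏ l ∈ Finset.Ico (j + 1) (k + 1), (1 - γ l * a)) *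
          ∏ i ∈ Finset.range (j + 1), (1 - ρ i * b)
      ≤ ∑ j ∈ Finset.range (k + 1),
        (∏ l ∈ Finset.range (k + 1), (1 - γ l * a)) *
          (γ j * ∏ i ∈ Finset.range (j + 1), (1 - γ i * a)) := Finset.sum_le_sum hterm
    _ = (∏ l ∈ Finset.range (k + 1), (1 - γ l * a)) *
        ∑ j ∈ Finset.range (k + 1), γ j * ∏ i ∈ Finset.range (j + 1), (1 - γ i * a) := by
        rw [Finset.mul_sum]
    _ ≤ (∏ l ∈ Finset.range (k + 1), (1 - γ l * a)) * (1 / a) := by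
        apply mul_le_mul_of_nonneg_left _ (hQnn (k + 1))
        rw [le_div_iff₀ ha]
        have := hsum (k + 1)
        have := hQnn (k + 1)
        nlinarith
    _ = 1 / a * ∏ l ∈ Finset.range (k + 1), (1 - γ l * a) := by ring
end

section
/- Lemma D.1 (expected norm of a product of random matrices). Let Y_1, Y_2, … be a sequence of mutually independent, symmetric random matrices in ℝ^{d×d} and define Z_0 = I and Z_i = Y_i Z_{i−1} for i ≥ 1. Suppose there exist μ and σ² such that ‖E[Y_i]‖ ≤ 1 − μ (operator norm) and E[‖Y_i − E[Y_i]‖₂²] ≤ σ² (Schatten-2 / Frobenius norm) for every i, and (1 − μ)² + σ² < 1. Then for every t ≥ 0, E[‖Z_t‖²] ≤ E[‖Z_t‖₂²] ≤ d·((1 − μ)² + σ²)^t. -/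
/-!
Write `c = (1 - μ)² + σ²`. For a square-integrable random matrix `W` with mean `M` and a fixed
vector `v`, the cross term of `‖W v‖² = ‖(W - M) v‖² + 2⟪M v, (W - M) v⟫ + ‖M v‖²` has mean zero,
so `E ‖W v‖² ≤ (‖M‖² + E ‖W - M‖₂²) ‖v‖² ≤ c ‖v‖²`. Since `Y_{t+1}` is independent of
`Z_t = Y_t ⋯ Y_1`, this applies to the columns `v = Z_t e_j` conditionally on `Z_t` (Fubini for
the joint law), and summing over `j` gives `E ‖Z_{t+1}‖₂² ≤ c E ‖Z_t‖₂²` with `‖Z_0‖₂² = d`.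
The operator norm is dominated by the Frobenius norm by Cauchy–Schwarz.
-/

open MeasureTheory ProbabilityTheory

noncomputable section

/-- The squared Schatten-2 (Frobenius) norm of an operator on `ℝ^d`,
`‖A‖₂² = ∑_j ‖A e_j‖²`. -/
def frobSq {d : ℕ} (A : EuclideanSpace ℝ (Fin d) →L[ℝ] EuclideanSpace ℝ (Fin d)) : ℝ :=
  ∑ j : Fin d, ‖A (EuclideanSpace.single j 1)‖ ^ 2

open scoped ENNReal

local notation "𝕄" d:max => EuclideanSpace ℝ (Fin d) →L[ℝ] EuclideanSpace ℝ (Fin d)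

section Frobenius

variable {d : ℕ}

lemma frobSq_nonneg (A : 𝕄 d) : 0 ≤ frobSq A :=
  Finset.sum_nonneg fun _ _ => by positivity

@[simp] lemma frobSq_one : frobSq (1 : 𝕄 d) = d := by
  simp [frobSq]

lemma frobSq_mul (A B : 𝕄 d) :
    frobSq (A * B) = ∑ j : Fin d, ‖A (B (EuclideanSpace.single j 1))‖ ^ 2 :=
  rfl

lemma continuous_frobSq : Continuous (frobSq (d := d)) := by
  unfold frobSq; fun_prop

lemma norm_apply_sq_le_frobSq_mul (A : 𝕄 d) (v : EuclideanSpace ℝ (Fin d)) :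
    ‖A v‖ ^ 2 ≤ frobSq A * ‖v‖ ^ 2 := by
  have hv : A v = ∑ j, v j • A (EuclideanSpace.single j 1) := by
    conv_lhs => rw [← (EuclideanSpace.basisFun (Fin d) ℝ).sum_repr v]
    simp
  calc ‖A v‖ ^ 2 ≤ (∑ j, |v j| * ‖A (EuclideanSpace.single j 1)‖) ^ 2 := by
        gcongr
        rw [hv]
        refine (norm_sum_le _ _).trans (le_of_eq ?_)
        simp [norm_smul]
    _ ≤ (∑ j, |v j| ^ 2) * ∑ j, ‖A (EuclideanSpace.single j 1)‖ ^ 2 :=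
        Finset.sum_mul_sq_le_sq_mul_sq _ _ _
    _ = frobSq A * ‖v‖ ^ 2 := by
        rw [EuclideanSpace.norm_eq, Real.sq_sqrt (by positivity), frobSq, mul_comm]
        simp

lemma opNorm_sq_le_frobSq (A : 𝕄 d) : ‖A‖ ^ 2 ≤ frobSq A := by
  have hA : ‖A‖ ≤ √(frobSq A) := A.opNorm_le_bound (Real.sqrt_nonneg _) fun v =>
    (pow_le_pow_iff_left₀ (norm_nonneg _) (by positivity) two_ne_zero).1 <| by
      rw [mul_pow, Real.sq_sqrt (frobSq_nonneg A)]
      exact norm_apply_sq_le_frobSq_mul A v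
  simpa [Real.sq_sqrt (frobSq_nonneg A)] using pow_le_pow_left₀ (norm_nonneg A) hA 2

end Frobenius

section SecondMoment

variable {Ω : Type*} [MeasurableSpace Ω] {μ : Measure Ω}

lemma integral_norm_sq_eq_integral_norm_sub_sq_add {E : Type*} [NormedAddCommGroup E]
    [InnerProductSpace ℝ E] [CompleteSpace E] [IsProbabilityMeasure μ] {X : Ω → E}
    (hX : MemLp X 2 μ) :
    ∫ ω, ‖X ω‖ ^ 2 ∂μ = ∫ ω, ‖X ω - ∫ ω', X ω' ∂μ‖ ^ 2 ∂μ + ‖∫ ω, X ω ∂μ‖ ^ 2 := by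
  set m := ∫ ω, X ω ∂μ
  have hX1 : Integrable X μ := hX.integrable one_le_two
  have hsq : Integrable (fun ω => ‖X ω‖ ^ 2) μ := hX.integrable_norm_pow two_ne_zero
  have hinner : Integrable (fun ω => 2 * inner ℝ m (X ω)) μ := (hX1.const_inner m).const_mul 2
  have hexpand : ∀ ω, ‖X ω - m‖ ^ 2 = ‖X ω‖ ^ 2 - 2 * inner ℝ m (X ω) + ‖m‖ ^ 2 := fun ω => by
    rw [norm_sub_sq_real, real_inner_comm]
  simp_rw [hexpand]
  rw [integral_add (f := fun ω => ‖X ω‖ ^ 2 - 2 * inner ℝ m (X ω)) (hsq.sub hinner)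
    (integrable_const _), integral_sub hsq hinner,
    integral_const_mul, integral_inner hX1, real_inner_self_eq_norm_sq, integral_const,
    probReal_univ, one_smul]
  ring

variable {d : ℕ}

lemma MeasureTheory.MemLp.apply {W : Ω → 𝕄 d} (hW : MemLp W 2 μ)
    (v : EuclideanSpace ℝ (Fin d)) : MemLp (fun ω => W ω v) 2 μ :=
  (ContinuousLinearMap.apply ℝ (EuclideanSpace ℝ (Fin d)) v).comp_memLp' hW

lemma MeasureTheory.MemLp.integrable_frobSq_mul {W : Ω → 𝕄 d} (hW : MemLp W 2 μ) (B : 𝕄 d) :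
    Integrable (fun ω => frobSq (W ω * B)) μ :=
  integrable_finsetSum _ fun _ _ => (hW.apply _).integrable_norm_pow two_ne_zero

lemma MeasureTheory.MemLp.integrable_frobSq {W : Ω → 𝕄 d} (hW : MemLp W 2 μ) :
    Integrable (fun ω => frobSq (W ω)) μ := by
  simpa using hW.integrable_frobSq_mul 1

lemma integral_norm_apply_sq_le [IsProbabilityMeasure μ] {W : Ω → 𝕄 d} (hW : MemLp W 2 μ)
    (v : EuclideanSpace ℝ (Fin d)) :
    ∫ ω, ‖W ω v‖ ^ 2 ∂μ
      ≤ (‖∫ ω, W ω ∂μ‖ ^ 2 + ∫ ω, frobSq (W ω - ∫ ω', W ω' ∂μ) ∂μ) * ‖v‖ ^ 2 := by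
  set M := ∫ ω, W ω ∂μ
  have hmean : ∫ ω, W ω v ∂μ = M v :=
    (ContinuousLinearMap.integral_apply (hW.integrable one_le_two) v).symm
  have hdev : MemLp (fun ω => W ω - M) 2 μ := hW.sub (memLp_const M)
  rw [integral_norm_sq_eq_integral_norm_sub_sq_add (hW.apply v), hmean]
  calc ∫ ω, ‖W ω v - M v‖ ^ 2 ∂μ + ‖M v‖ ^ 2
      ≤ ∫ ω, frobSq (W ω - M) * ‖v‖ ^ 2 ∂μ + ‖M‖ ^ 2 * ‖v‖ ^ 2 := by
        refine add_le_add (integral_mono ((hdev.apply v).integrable_norm_pow two_ne_zero)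
          (hdev.integrable_frobSq.mul_const _) fun ω => norm_apply_sq_le_frobSq_mul (W ω - M) v) ?_
        rw [← mul_pow]
        exact pow_le_pow_left₀ (norm_nonneg _) (M.le_opNorm v) 2
    _ = _ := by rw [integral_mul_const]; ring

lemma integral_frobSq_mul_le [IsProbabilityMeasure μ] {W : Ω → 𝕄 d} (hW : MemLp W 2 μ)
    (B : 𝕄 d) :
    ∫ ω, frobSq (W ω * B) ∂μ
      ≤ (‖∫ ω, W ω ∂μ‖ ^ 2 + ∫ ω, frobSq (W ω - ∫ ω', W ω' ∂μ) ∂μ) * frobSq B := by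
  calc ∫ ω, frobSq (W ω * B) ∂μ
      = ∑ j, ∫ ω, ‖W ω (B (EuclideanSpace.single j 1))‖ ^ 2 ∂μ := by
        simp only [frobSq_mul]
        exact integral_finsetSum _ fun j _ => (hW.apply _).integrable_norm_pow two_ne_zero
    _ ≤ _ := Finset.sum_le_sum fun j _ => integral_norm_apply_sq_le hW _
    _ = _ := (Finset.mul_sum _ _ _).symm

end SecondMoment

section LeftProd

variable {M : Type*} [Monoid M]

def leftProd (y : ℕ → M) : ℕ → M
  | 0 => 1
  | t + 1 => y (t + 1) * leftProd y t

lemma eq_leftProd {y z : ℕ → M} (h0 : z 0 = 1) (h : ∀ i, z (i + 1) = y (i + 1) * z i) :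
    z = leftProd y := by
  funext t
  induction t with
  | zero => exact h0
  | succ t ih => rw [h, ih, leftProd]

lemma leftProd_congr {y y' : ℕ → M} {t : ℕ} (h : ∀ i ∈ Finset.Icc 1 t, y i = y' i) :
    leftProd y t = leftProd y' t := by
  induction t with
  | zero => rfl
  | succ t ih =>
    rw [leftProd, leftProd, h (t + 1) (by simp),
      ih fun i hi => h i (Finset.Icc_subset_Icc_right t.le_succ hi)]

lemma leftProd_apply {Ω : Type*} (Y : ℕ → Ω → M) (t : ℕ) (ω : Ω) :
    leftProd Y t ω = leftProd (fun i => Y i ω) t := by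
  induction t with
  | zero => rfl
  | succ t ih => rw [leftProd, Pi.mul_apply, ih, leftProd]

variable [MeasurableSpace M] [MeasurableMul₂ M] {α : Type*} [MeasurableSpace α]

lemma Measurable.leftProd {f : ℕ → α → M} (hf : ∀ i, Measurable (f i)) (t : ℕ) :
    Measurable (leftProd f t) := by
  induction t with
  | zero => exact measurable_one
  | succ t ih => exact (hf _).mul ih

lemma AEMeasurable.leftProd {μ : Measure α} {f : ℕ → α → M} (hf : ∀ i, AEMeasurable (f i) μ)
    (t : ℕ) : AEMeasurable (leftProd f t) μ := by
  induction t with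
  | zero => exact aemeasurable_one
  | succ t ih => exact (hf _).mul ih

lemma ProbabilityTheory.iIndepFun.indepFun_leftProd {Ω : Type*} [MeasurableSpace Ω]
    {μ : Measure Ω} {Y : ℕ → Ω → M} (h : iIndepFun Y μ) (hY : ∀ i, AEMeasurable (Y i) μ)
    (t : ℕ) : IndepFun (Y (t + 1)) (leftProd Y t) μ := by
  have htuple := h.indepFun_finset₀ {t + 1} (Finset.Icc 1 t) (by simp) hY
  let g : ℕ → (Finset.Icc 1 t → M) → M := fun i =>
    if hi : i ∈ Finset.Icc 1 t then fun x => x ⟨i, hi⟩ else 1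
  have hg : ∀ i, Measurable (g i) := fun i => by
    dsimp only [g]
    split_ifs
    exacts [measurable_pi_apply _, measurable_one]
  convert htuple.comp (measurable_pi_apply ⟨t + 1, Finset.mem_singleton_self _⟩)
    (Measurable.leftProd hg t) using 1
  · rfl
  funext ω
  rw [Function.comp_apply, leftProd_apply, leftProd_apply]
  exact leftProd_congr fun i hi => by simp only [g, dif_pos hi]

end LeftProd

lemma ProbabilityTheory.IndepFun.lintegral_eq_lintegral_lintegral {Ω α β : Type*}
    [MeasurableSpace Ω] [MeasurableSpace α] [MeasurableSpace β] {μ : Measure Ω}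
    [IsFiniteMeasure μ] {X : Ω → α} {Y : Ω → β} (hXY : IndepFun X Y μ) (hX : AEMeasurable X μ)
    (hY : AEMeasurable Y μ) {f : α → β → ℝ≥0∞} (hf : Measurable (Function.uncurry f)) :
    ∫⁻ ω, f (X ω) (Y ω) ∂μ = ∫⁻ ω, ∫⁻ ω', f (X ω') (Y ω) ∂μ ∂μ := by
  calc ∫⁻ ω, f (X ω) (Y ω) ∂μ = ∫⁻ p, Function.uncurry f p ∂μ.map fun ω => (X ω, Y ω) :=
        (lintegral_map' hf.aemeasurable (hX.prodMk hY)).symm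
    _ = ∫⁻ y, ∫⁻ x, f x y ∂μ.map X ∂μ.map Y := by
        rw [hXY.map_prod_eq_prod_map_map hX hY, lintegral_prod_symm' _ hf]
        rfl
    _ = ∫⁻ ω, ∫⁻ ω', f (X ω') (Y ω) ∂μ ∂μ := by
        rw [lintegral_map' (f := fun y => ∫⁻ x, f x y ∂μ.map X)
          (hf.lintegral_prod_left').aemeasurable hY]
        exact lintegral_congr fun ω =>
          lintegral_map' (hf.comp measurable_prodMk_right).aemeasurable hX

section RandomProducts

variable {Ω : Type*} [MeasurableSpace Ω] {μ : Measure Ω} [IsProbabilityMeasure μ] {d : ℕ}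
  [MeasurableSpace (𝕄 d)] [BorelSpace (𝕄 d)] {Y : ℕ → Ω → 𝕄 d} {c : ℝ}

lemma lintegral_frobSq_leftProd_le (hindep : iIndepFun Y μ) (hY : ∀ i, MemLp (Y i) 2 μ)
    (hc : ∀ i, ‖∫ ω, Y i ω ∂μ‖ ^ 2 + ∫ ω, frobSq (Y i ω - ∫ ω', Y i ω' ∂μ) ∂μ ≤ c) (t : ℕ) :
    ∫⁻ ω, ENNReal.ofReal (frobSq (leftProd Y t ω)) ∂μ ≤ ENNReal.ofReal (d * c ^ t) := by
  have hc0 : 0 ≤ c :=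
    (add_nonneg (sq_nonneg _) (integral_nonneg fun _ => frobSq_nonneg _)).trans (hc 0)
  have hYm : ∀ i, AEMeasurable (Y i) μ := fun i => (hY i).aestronglyMeasurable.aemeasurable
  have hstep : ∀ i B, ∫⁻ ω, ENNReal.ofReal (frobSq (Y i ω * B)) ∂μ
      ≤ ENNReal.ofReal c * ENNReal.ofReal (frobSq B) := fun i B => by
    rw [← ofReal_integral_eq_lintegral_ofReal ((hY i).integrable_frobSq_mul B)
      (ae_of_all _ fun _ => frobSq_nonneg _), ← ENNReal.ofReal_mul hc0]
    exact ENNReal.ofReal_le_ofReal ((integral_frobSq_mul_le (hY i) B).trans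
      (mul_le_mul_of_nonneg_right (hc i) (frobSq_nonneg B)))
  induction t with
  | zero => simp [leftProd]
  | succ t ih =>
    have hmul : Measurable (Function.uncurry fun A B : 𝕄 d => ENNReal.ofReal (frobSq (A * B))) :=
      (ENNReal.continuous_ofReal.comp (continuous_frobSq.comp continuous_mul)).measurable
    calc ∫⁻ ω, ENNReal.ofReal (frobSq (leftProd Y (t + 1) ω)) ∂μ
        = ∫⁻ ω, ∫⁻ ω', ENNReal.ofReal (frobSq (Y (t + 1) ω' * leftProd Y t ω)) ∂μ ∂μ :=
          (hindep.indepFun_leftProd hYm t).lintegral_eq_lintegral_lintegral (hYm _)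
            (AEMeasurable.leftProd hYm t) hmul
      _ ≤ ∫⁻ ω, ENNReal.ofReal c * ENNReal.ofReal (frobSq (leftProd Y t ω)) ∂μ :=
          lintegral_mono fun ω => hstep _ _
      _ ≤ ENNReal.ofReal c * ENNReal.ofReal (d * c ^ t) := by
          rw [lintegral_const_mul' _ _ ENNReal.ofReal_ne_top]
          gcongr
      _ = ENNReal.ofReal (d * c ^ (t + 1)) := by
          rw [← ENNReal.ofReal_mul hc0]
          ring_nf

lemma integrable_frobSq_leftProd (hindep : iIndepFun Y μ) (hY : ∀ i, MemLp (Y i) 2 μ)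
    (hc : ∀ i, ‖∫ ω, Y i ω ∂μ‖ ^ 2 + ∫ ω, frobSq (Y i ω - ∫ ω', Y i ω' ∂μ) ∂μ ≤ c) (t : ℕ) :
    Integrable (fun ω => frobSq (leftProd Y t ω)) μ :=
  ⟨continuous_frobSq.comp_aestronglyMeasurable (AEMeasurable.leftProd
      (fun i => (hY i).aestronglyMeasurable.aemeasurable) t).aestronglyMeasurable,
    (hasFiniteIntegral_iff_ofReal (ae_of_all _ fun _ => frobSq_nonneg _)).2
      ((lintegral_frobSq_leftProd_le hindep hY hc t).trans_lt ENNReal.ofReal_lt_top)⟩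

lemma integral_frobSq_leftProd_le (hindep : iIndepFun Y μ) (hY : ∀ i, MemLp (Y i) 2 μ)
    (hc : ∀ i, ‖∫ ω, Y i ω ∂μ‖ ^ 2 + ∫ ω, frobSq (Y i ω - ∫ ω', Y i ω' ∂μ) ∂μ ≤ c) (t : ℕ) :
    ∫ ω, frobSq (leftProd Y t ω) ∂μ ≤ d * c ^ t := by
  have hc0 : 0 ≤ c :=
    (add_nonneg (sq_nonneg _) (integral_nonneg fun _ => frobSq_nonneg _)).trans (hc 0)
  rw [integral_eq_lintegral_of_nonneg_ae (ae_of_all _ fun _ => frobSq_nonneg _)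
    (integrable_frobSq_leftProd hindep hY hc t).1]
  exact ENNReal.toReal_le_of_le_ofReal (by positivity)
    (lintegral_frobSq_leftProd_le hindep hY hc t)

end RandomProducts

theorem lemma_D_1_general {d : ℕ}
    [mM : MeasurableSpace (EuclideanSpace ℝ (Fin d) →L[ℝ] EuclideanSpace ℝ (Fin d))]
    [BorelSpace (EuclideanSpace ℝ (Fin d) →L[ℝ] EuclideanSpace ℝ (Fin d))]
    {Ω : Type*} [MeasurableSpace Ω] (μ : Measure Ω) [IsProbabilityMeasure μ]
    (Y : ℕ → Ω → (EuclideanSpace ℝ (Fin d) →L[ℝ] EuclideanSpace ℝ (Fin d)))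
    (Z : ℕ → Ω → (EuclideanSpace ℝ (Fin d) →L[ℝ] EuclideanSpace ℝ (Fin d)))
    (μ' σ2 : ℝ)
    -- the `Y i` are mutually independent, symmetric, square-integrable random matrices
    (hindep : iIndepFun (m := fun _ => mM) Y μ)
    (hL2 : ∀ i, MemLp (Y i) 2 μ)
    -- `Z_0 = I` and `Z_i = Y_i Z_{i-1}`
    (hZ0 : ∀ ω, Z 0 ω = 1)
    (hZ : ∀ i ω, Z (i + 1) ω = Y (i + 1) ω * Z i ω)
    -- mean and variance bounds
    (hmean : ∀ i, ‖∫ ω, Y i ω ∂μ‖ ≤ 1 - μ')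
    (hvar : ∀ i, (∫ ω, frobSq (Y i ω - ∫ ω', Y i ω' ∂μ) ∂μ) ≤ σ2) :
    ∀ t : ℕ,
      (∫ ω, ‖Z t ω‖ ^ 2 ∂μ) ≤ ∫ ω, frobSq (Z t ω) ∂μ ∧
      (∫ ω, frobSq (Z t ω) ∂μ) ≤ d * ((1 - μ') ^ 2 + σ2) ^ t := by
  obtain rfl : Z = leftProd Y := eq_leftProd (funext hZ0) fun i => funext (hZ i)
  have hc : ∀ i, ‖∫ ω, Y i ω ∂μ‖ ^ 2 + ∫ ω, frobSq (Y i ω - ∫ ω', Y i ω' ∂μ) ∂μ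
      ≤ (1 - μ') ^ 2 + σ2 := fun i =>
    add_le_add (pow_le_pow_left₀ (norm_nonneg _) (hmean i) 2) (hvar i)
  intro t
  refine ⟨integral_mono_of_nonneg (ae_of_all _ fun _ => by positivity)
    (integrable_frobSq_leftProd hindep hL2 hc t) (ae_of_all _ fun ω => opNorm_sq_le_frobSq _),
    integral_frobSq_leftProd_le hindep hL2 hc t⟩

/-- **Lemma D.1** (expected norm of a product of random matrices).  The operator space
`ℝ^d →L ℝ^d` is endowed with its Borel σ-algebra. -/
theorem lemma_D_1 {d : ℕ}
    [mM : MeasurableSpace (EuclideanSpace ℝ (Fin d) →L[ℝ] EuclideanSpace ℝ (Fin d))]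
    [BorelSpace (EuclideanSpace ℝ (Fin d) →L[ℝ] EuclideanSpace ℝ (Fin d))]
    {Ω : Type*} [MeasurableSpace Ω] (μ : Measure Ω) [IsProbabilityMeasure μ]
    (Y : ℕ → Ω → (EuclideanSpace ℝ (Fin d) →L[ℝ] EuclideanSpace ℝ (Fin d)))
    (Z : ℕ → Ω → (EuclideanSpace ℝ (Fin d) →L[ℝ] EuclideanSpace ℝ (Fin d)))
    (μ' σ2 : ℝ)
    -- the `Y i` are mutually independent, symmetric, square-integrable random matrices
    (hindep : iIndepFun (m := fun _ => mM) Y μ)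
    (hsym : ∀ i ω, IsSelfAdjoint (Y i ω))
    (hL2 : ∀ i, MemLp (Y i) 2 μ)
    -- `Z_0 = I` and `Z_i = Y_i Z_{i-1}`
    (hZ0 : ∀ ω, Z 0 ω = 1)
    (hZ : ∀ i ω, Z (i + 1) ω = Y (i + 1) ω * Z i ω)
    -- mean and variance bounds
    (hmean : ∀ i, ‖∫ ω, Y i ω ∂μ‖ ≤ 1 - μ')
    (hvar : ∀ i, (∫ ω, frobSq (Y i ω - ∫ ω', Y i ω' ∂μ) ∂μ) ≤ σ2)
    (hcontract : (1 - μ') ^ 2 + σ2 < 1) :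
    ∀ t : ℕ,
      (∫ ω, ‖Z t ω‖ ^ 2 ∂μ) ≤ ∫ ω, frobSq (Z t ω) ∂μ ∧
      (∫ ω, frobSq (Z t ω) ∂μ) ≤ d * ((1 - μ') ^ 2 + σ2) ^ t :=
  lemma_D_1_general (mM := mM) μ Y Z μ' σ2 hindep hL2 hZ0 hZ hmean hvar
end
end
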